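/- Let V be an idempotent variety and F₂ its free algebra on two generators. If s ⇢ s' and s ⇢ s'', then s ⇢ r̄(s',s'') for every r ∈ F₂. Dually, if s' ⇢ s and s'' ⇢ s, then r̄(s',s'') ⇢ s for every r ∈ F₂. -/
import Mathlib


/-- A signature: a type of operation symbols with arities. -/
structure Sgn where
  ops : Type
  arity : ops → ℕ

/-- Terms over a signature with variables from `V`. -/
inductive Trm (S : Sgn) (V : Type) : Type
  | var : V → Trm S V
  | op : (f : S.ops) → (Fin (S.arity f) → Trm S V) → Trm S V

/-- An algebra for a signature. -/
structure Alg (S : Sgn) where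
  carrier : Type
  interp : (f : S.ops) → (Fin (S.arity f) → carrier) → carrier

/-- Evaluation of a term in an algebra under an assignment. -/
def Trm.eval {S : Sgn} {V : Type} (A : Alg S) (asgn : V → A.carrier) :
    Trm S V → A.carrier
  | .var v => asgn v
  | .op f args => A.interp f (fun i => (args i).eval A asgn)

/-- The identity `t ≈ u` holds throughout the class (variety) `K`. -/
def HoldsIn {S : Sgn} {V : Type} (K : Set (Alg S)) (t u : Trm S V) : Prop :=
  ∀ A ∈ K, ∀ asgn : V → A.carrier, t.eval A asgn = u.eval A asgn

/-- Substitution of terms for variables. -/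
def Trm.subst {S : Sgn} {V W : Type} (σ : V → Trm S W) : Trm S V → Trm S W
  | .var v => σ v
  | .op f args => .op f (fun i => (args i).subst σ)

/-- Every basic operation is idempotent throughout `K`. -/
def IdemK {S : Sgn} (K : Set (Alg S)) : Prop :=
  ∀ A ∈ K, ∀ (f : S.ops) (a : A.carrier), A.interp f (fun _ => a) = a

abbrev T3 (S : Sgn) := Trm S (Fin 3)
abbrev T2 (S : Sgn) := Trm S (Fin 2)

def x3 {S : Sgn} : T3 S := .var 0
def y3 {S : Sgn} : T3 S := .var 1
def z3 {S : Sgn} : T3 S := .var 2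

/-- The generator x̄ of the free algebra on two generators (terms as representatives). -/
def xF {S : Sgn} : T2 S := .var 0
/-- The generator z̄. -/
def zF {S : Sgn} : T2 S := .var 1

/-- `app3 t a b c` is the term `t(a,b,c)`. -/
def app3 {S : Sgn} {V : Type} (t : T3 S) (a b c : Trm S V) : Trm S V :=
  t.subst ![a, b, c]

/-- The binary term `ŝ(x,z)` viewed as a ternary term (not depending on `y`). -/
def bin3 {S : Sgn} (s : T2 S) : T3 S := s.subst ![x3, z3]

/-- `sub2 s a b` is `s̄(a,b)`, the composition of binary terms. -/
def sub2 {S : Sgn} (s a b : T2 S) : T2 S := s.subst ![a, b]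

/-- Dashed arrow `s ⇢ r`. -/
def DashedTo {S : Sgn} (K : Set (Alg S)) (s r : T2 S) : Prop :=
  ∃ t : T3 S, HoldsIn K (bin3 s) (app3 t x3 x3 z3) ∧ HoldsIn K (app3 t x3 z3 z3) (bin3 r)

/-- Solid arrow `s → r`. -/
def SolidTo {S : Sgn} (K : Set (Alg S)) (s r : T2 S) : Prop :=
  ∃ t : T3 S, HoldsIn K (bin3 s) (app3 t x3 x3 z3) ∧ HoldsIn K (app3 t x3 z3 z3) (bin3 r) ∧
    HoldsIn K (app3 t x3 y3 x3) x3



lemma eval_subst {S : Sgn} {V W : Type} (A : Alg S) (σ : V → Trm S W)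
    (asgn : W → A.carrier) (t : Trm S V) :
    (t.subst σ).eval A asgn = t.eval A (fun v => (σ v).eval A asgn) := by
  induction t with
  | var v => rfl
  | op f args ih =>
    show A.interp f _ = A.interp f _
    congr 1
    funext i
    exact ih i

lemma eval_const {S : Sgn} {V : Type} (A : Alg S)
    (hA : ∀ (f : S.ops) (a : A.carrier), A.interp f (fun _ => a) = a)
    (t : Trm S V) (asgn : V → A.carrier) (a : A.carrier) (h : ∀ v, asgn v = a) :
    t.eval A asgn = a := by
  induction t with
  | var v => exact h v
  | op f args ih =>
    show A.interp f (fun i => (args i).eval A asgn) = a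
    rw [show (fun i => (args i).eval A asgn) = (fun _ => a) from funext fun i => ih i]
    exact hA f a

lemma eval_app3_subst2 {S : Sgn} {V : Type} (A : Alg S) (r : T2 S) (u v : T3 S)
    (a b c : Trm S V) (asgn : V → A.carrier) :
    (app3 (r.subst ![u, v]) a b c).eval A asgn
      = r.eval A ![(app3 u a b c).eval A asgn, (app3 v a b c).eval A asgn] := by
  unfold app3
  rw [eval_subst, eval_subst]
  congr 1
  funext i
  fin_cases i <;> simp [eval_subst]

lemma eval_bin3_sub2 {S : Sgn} (A : Alg S) (r a b : T2 S)
    (asgn : Fin 3 → A.carrier) :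
    (bin3 (sub2 r a b)).eval A asgn
      = r.eval A ![(bin3 a).eval A asgn, (bin3 b).eval A asgn] := by
  unfold bin3 sub2
  rw [eval_subst, eval_subst, eval_subst]
  congr 1
  funext i
  fin_cases i <;> · rw [eval_subst]; rfl

/-- if `s ⇢ s'` and `s ⇢ s''` then `s ⇢ r̄(s',s'')` for every `r`;
dually, if `s' ⇢ s` and `s'' ⇢ s` then `r̄(s',s'') ⇢ s` for every `r`. -/
theorem dashed_to_comp {S : Sgn} (K : Set (Alg S)) (hid : IdemK K)
    (s s' s'' : T2 S) :
    ((DashedTo K s s') → (DashedTo K s s'') → ∀ r : T2 S, DashedTo K s (sub2 r s' s'')) ∧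
    ((DashedTo K s' s) → (DashedTo K s'' s) → ∀ r : T2 S, DashedTo K (sub2 r s' s'') s) := by
  constructor
  · rintro ⟨t', h1', h2'⟩ ⟨t'', h1'', h2''⟩ r
    refine ⟨r.subst ![t', t''], ?_, ?_⟩
    · intro A hA asgn
      rw [eval_app3_subst2]
      refine (eval_const A (hid A hA) r _ ((bin3 s).eval A asgn) ?_).symm
      intro v
      fin_cases v
      · exact (h1' A hA asgn).symm
      · exact (h1'' A hA asgn).symm
    · intro A hA asgn
      rw [eval_app3_subst2, eval_bin3_sub2]
      have hfun : (![(app3 t' x3 z3 z3).eval A asgn, (app3 t'' x3 z3 z3).eval A asgn] :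
          Fin 2 → A.carrier) = ![(bin3 s').eval A asgn, (bin3 s'').eval A asgn] := by
        funext i
        fin_cases i
        · exact h2' A hA asgn
        · exact h2'' A hA asgn
      rw [hfun]
  · rintro ⟨t', h1', h2'⟩ ⟨t'', h1'', h2''⟩ r
    refine ⟨r.subst ![t', t''], ?_, ?_⟩
    · intro A hA asgn
      rw [eval_app3_subst2, eval_bin3_sub2]
      have hfun : (![(bin3 s').eval A asgn, (bin3 s'').eval A asgn] :
          Fin 2 → A.carrier) = ![(app3 t' x3 x3 z3).eval A asgn, (app3 t'' x3 x3 z3).eval A asgn] := by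
        funext i
        fin_cases i
        · exact h1' A hA asgn
        · exact h1'' A hA asgn
      rw [hfun]
    · intro A hA asgn
      rw [eval_app3_subst2]
      refine eval_const A (hid A hA) r _ ((bin3 s).eval A asgn) ?_
      intro v
      fin_cases v
      · exact h2' A hA asgn
      · exact h2'' A hA asgn
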